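/- Let Λ = {g_i : A_i → B_i} be a treeing generating an ergodic measure-preserving equivalence relation R_Λ. For any N ≥ 1, g_1,…,g_N ∈ Λ and f_1,…,f_N ∈ L^∞(X), the operator Φ = Σ_{i=1}^N M_{f_i} L_{g_i} satisfies τ(Φ^n) = 0 for all n ≥ 1. -/

import Mathlib

open MeasureTheory

noncomputable section
open scoped Classical

/-- The (pointwise model of the) Feldman–Moore operator `L_g` on functions on `X × X`:
`(L_g Ψ)(x,y) = χ_{g.target}(x) · Ψ(g⁻¹ x, y)`. -/
def FMl {X : Type*} (g : PartialEquiv X X) :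
    (X × X → ℂ) →ₗ[ℂ] (X × X → ℂ) where
  toFun Ψ := fun p => if p.1 ∈ g.target then Ψ (g.symm p.1, p.2) else 0
  map_add' Ψ Φ := by
    funext p; by_cases h : p.1 ∈ g.target <;> simp [h]
  map_smul' c Ψ := by
    funext p; by_cases h : p.1 ∈ g.target <;> simp [h]

/-- The multiplication operator `M_f`: `(M_f Ψ)(x,y) = f(x) Ψ(x,y)`. -/
def FMm {X : Type*} (f : X → ℂ) :
    (X × X → ℂ) →ₗ[ℂ] (X × X → ℂ) where
  toFun Ψ := fun p => f p.1 * Ψ p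
  map_add' Ψ Φ := by funext p; simp [mul_add]
  map_smul' c Ψ := by funext p; simp; ring

/-- `f ∘ g⁻¹`, extended by `0` outside the target of `g`. -/
def extMap {X : Type*} (g : PartialEquiv X X) (f : X → ℂ) : X → ℂ :=
  fun x => if x ∈ g.target then f (g.symm x) else 0

/-- Composition `ω = g₁ g₂ ⋯ g_k` of a list of partial isomorphisms (rightmost acts first). -/
def wordComp {X : Type*} (gs : List (PartialEquiv X X)) : PartialEquiv X X :=
  gs.foldr (fun g acc => acc.trans g) (PartialEquiv.refl X)

/-- `g^n`, the `n`-fold composition of a partial isomorphism with itself. -/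
def pePow {X : Type*} (g : PartialEquiv X X) : ℕ → PartialEquiv X X
  | 0 => PartialEquiv.refl X
  | n + 1 => (pePow g n).trans g

/-- The graph of the partial isomorphism `g` is contained in the relation `R`. -/
def GraphIn {X : Type*} (R : X → X → Prop) (g : PartialEquiv X X) : Prop :=
  ∀ x ∈ g.source, R x (g x)

/-- `g : A → B` is a measure-preserving Borel partial isomorphism. -/
def MeasurePreservingPiso {X : Type*} [MeasurableSpace X] (μ : Measure X)
    (g : PartialEquiv X X) : Prop :=
  MeasurableSet g.source ∧ MeasurableSet g.target ∧
    Measurable (g : X → X) ∧ Measurable (g.symm : X → X) ∧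
    ∀ s : Set X, MeasurableSet s → s ⊆ g.source → μ (g '' s) = μ s


/-- `δ₀`, the characteristic function of the diagonal of `R` (as a function on `X × X`). -/
def diagOne (X : Type*) : X × X → ℂ := fun p => if p.1 = p.2 then 1 else 0


/-- The canonical trace `τ(T) = ⟨T δ₀, δ₀⟩` of the Feldman–Moore construction, written out
via the inner product of `L²(R)`:  `⟨Ψ, Φ⟩ = ∫_X ∑_{z ∼ x} Ψ(x,z) conj (Φ(x,z)) dμ(x)`. -/
def FMtrace {X : Type*} [MeasurableSpace X] (μ : Measure X) (R : X → X → Prop)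
    (T : (X × X → ℂ) →ₗ[ℂ] (X × X → ℂ)) : ℂ :=
  ∫ x, (∑' z : {z : X // R x z}, T (diagOne X) (x, z.1) * (starRingEnd ℂ) (diagOne X (x, z.1))) ∂μ

/-- The equivalence relation `R_Λ` generated by a family of partial isomorphisms. -/
def RLam {X ι : Type*} (Λ : ι → PartialEquiv X X) : X → X → Prop :=
  Relation.EqvGen (fun x y => ∃ i, x ∈ (Λ i).source ∧ (Λ i) x = y)

/-- The partial isomorphism corresponding to a letter `g_i^{±1}`. -/
def letterIso {X ι : Type*} (Λ : ι → PartialEquiv X X) : ι × Bool → PartialEquiv X X :=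
  fun l => if l.2 then Λ l.1 else (Λ l.1).symm

/-- A word is reduced if no letter is followed by its inverse. -/
def IsReducedWord {ι : Type*} (w : List (ι × Bool)) : Prop :=
  w.Chain' fun a b => a.1 ≠ b.1 ∨ a.2 = b.2

/-- `Λ` is a treeing: every nontrivial reduced word has an a.e. trivial fixed-point set. -/
def IsTreeing {X ι : Type*} [MeasurableSpace X] (μ : Measure X)
    (Λ : ι → PartialEquiv X X) : Prop :=
  ∀ w : List (ι × Bool), w ≠ [] → IsReducedWord w →
    μ {x | x ∈ (wordComp (w.map (letterIso Λ))).source ∧ wordComp (w.map (letterIso Λ)) x = x} = 0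

/-- Ergodicity of an equivalence relation: every measurable saturated set is null or conull. -/
def IsErgodicRel {X : Type*} [MeasurableSpace X] (μ : Measure X) (R : X → X → Prop) : Prop :=
  ∀ s : Set X, MeasurableSet s → (∀ x ∈ s, ∀ y, R x y → y ∈ s) → μ s = 0 ∨ μ s = 1

end


/-
Expanding `Φⁿ δ₀` along the sum, `(Φⁿ δ₀)(x, x)` can only be nonzero when `x` is a fixed point
of some word `ω = g_{i₁} ⋯ g_{iₙ}` of length `n ≥ 1` in the generators. Such a word uses only
positive letters, so it is reduced, and the treeing hypothesis makes its fixed-point set null.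
As there are countably many words, the diagonal of `Φⁿ δ₀` vanishes almost everywhere, and with
it the trace `τ(Φⁿ) = ∫ (Φⁿ δ₀)(x, x) dμ(x)`.
-/

open MeasureTheory

lemma isReducedWord_map_true {ι : Type*} (l : List ι) :
    IsReducedWord (l.map fun i => ((i, true) : ι × Bool)) :=
  (List.isChain_map _).mpr (List.pairwise_of_forall fun _ _ => Or.inr rfl).isChain

lemma wordComp_cons {X : Type*} (g : PartialEquiv X X) (gs : List (PartialEquiv X X)) :
    wordComp (g :: gs) = (wordComp gs).trans g := rfl

lemma PartialEquiv.setOf_symm_apply_eq_self_subset {X : Type*} (e : PartialEquiv X X) :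
    {x | x ∈ e.target ∧ e.symm x = x} ⊆ {x | x ∈ e.source ∧ e x = x} := by
  rintro x ⟨hx, hfix⟩
  refine ⟨hfix ▸ e.map_target hx, ?_⟩
  conv_lhs => rw [← hfix]
  exact e.right_inv hx

lemma IsTreeing.measure_fixedPoints_wordComp_eq_zero {X ι : Type*} [MeasurableSpace X]
    {μ : Measure X} {Λ : ι → PartialEquiv X X} (htree : IsTreeing μ Λ) {l : List ι}
    (hl : l ≠ []) :
    μ {x | x ∈ (wordComp (l.map Λ)).target ∧ (wordComp (l.map Λ)).symm x = x} = 0 := by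
  have hword : (l.map fun i => ((i, true) : ι × Bool)).map (letterIso Λ) = l.map Λ := by
    simp [List.map_map, letterIso, Function.comp_def]
  have h := htree _ (by simpa using hl) (isReducedWord_map_true l)
  rw [hword] at h
  exact measure_mono_null (PartialEquiv.setOf_symm_apply_eq_self_subset _) h

lemma IsTreeing.ae_forall_not_fixedPoint_wordComp {X ι κ : Type*} [MeasurableSpace X]
    [Countable κ] {μ : Measure X} {Λ : ι → PartialEquiv X X} (htree : IsTreeing μ Λ)
    (idx : κ → ι) :
    ∀ᵐ x ∂μ, ∀ w : List κ, w ≠ [] →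
      ¬ (x ∈ (wordComp (w.map (Λ ∘ idx))).target ∧ (wordComp (w.map (Λ ∘ idx))).symm x = x) := by
  refine ae_all_iff.2 fun w => ?_
  rcases eq_or_ne w [] with rfl | hw
  · exact Filter.Eventually.of_forall fun _ h => (h rfl).elim
  · have h := htree.measure_fixedPoints_wordComp_eq_zero (l := w.map idx)
      (List.map_eq_nil_iff.not.2 hw)
    rw [List.map_map] at h
    filter_upwards [measure_eq_zero_iff_ae_notMem.1 h] with x hx _ using hx

section Support

variable {X κ : Type*} [Fintype κ] (g : κ → PartialEquiv X X) (f : κ → X → ℂ)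

lemma exists_of_sum_FMm_comp_FMl_apply_ne_zero {Ψ : X × X → ℂ} {x y : X}
    (h : (∑ i, FMm (f i) ∘ₗ FMl (g i)) Ψ (x, y) ≠ 0) :
    ∃ i, x ∈ (g i).target ∧ Ψ ((g i).symm x, y) ≠ 0 := by
  classical
  rw [LinearMap.sum_apply, Finset.sum_apply] at h
  obtain ⟨i, -, hi⟩ := Finset.exists_ne_zero_of_sum_ne_zero h
  change f i x * (if x ∈ (g i).target then Ψ ((g i).symm x, y) else 0) ≠ 0 at hi
  by_cases hx : x ∈ (g i).target
  · rw [if_pos hx] at hi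
    exact ⟨i, hx, right_ne_zero_of_mul hi⟩
  · simp [hx] at hi

lemma exists_word_of_sum_FMm_comp_FMl_pow_apply_ne_zero (n : ℕ) {Ψ : X × X → ℂ} {x y : X}
    (h : ((∑ i, FMm (f i) ∘ₗ FMl (g i)) ^ n) Ψ (x, y) ≠ 0) :
    ∃ w : List κ, w.length = n ∧ x ∈ (wordComp (w.map g)).target ∧
      Ψ ((wordComp (w.map g)).symm x, y) ≠ 0 := by
  induction n generalizing x with
  | zero => exact ⟨[], rfl, trivial, h⟩
  | succ n ih =>
    rw [pow_succ', Module.End.mul_apply] at h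
    obtain ⟨i, hx, hi⟩ := exists_of_sum_FMm_comp_FMl_apply_ne_zero g f h
    obtain ⟨w, hlen, hmem, hval⟩ := ih hi
    refine ⟨i :: w, by simp [hlen], ⟨hx, hmem⟩, ?_⟩
    simpa [wordComp_cons, PartialEquiv.trans_symm_eq_symm_trans_symm] using hval

lemma exists_fixedPoint_of_sum_FMm_comp_FMl_pow_diagOne_ne_zero {n : ℕ} (hn : 1 ≤ n) {x : X}
    (h : ((∑ i, FMm (f i) ∘ₗ FMl (g i)) ^ n) (diagOne X) (x, x) ≠ 0) :
    ∃ w : List κ, w ≠ [] ∧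
      x ∈ (wordComp (w.map g)).target ∧ (wordComp (w.map g)).symm x = x := by
  obtain ⟨w, hlen, hmem, hval⟩ := exists_word_of_sum_FMm_comp_FMl_pow_apply_ne_zero g f n h
  refine ⟨w, ?_, hmem, ?_⟩
  · rintro rfl
    simp at hlen
    omega
  · by_contra hne
    exact hval (by simp [diagOne, hne])

end Support

lemma FMtrace_eq_zero_of_ae_diag_eq_zero {X : Type*} [MeasurableSpace X] {μ : Measure X}
    {R : X → X → Prop} {T : (X × X → ℂ) →ₗ[ℂ] (X × X → ℂ)}
    (h : ∀ᵐ x ∂μ, T (diagOne X) (x, x) = 0) : FMtrace μ R T = 0 := by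
  refine integral_eq_zero_of_ae ?_
  filter_upwards [h] with x hx
  refine (tsum_congr fun z => ?_).trans tsum_zero
  by_cases hz : x = z.1
  · rw [← hz, hx, zero_mul]
  · simp [diagOne, hz]

open MeasureTheory in
theorem FMtrace_pow_eq_zero_general {X : Type*} [MeasurableSpace X]
    (μ : Measure X)
    {ι : Type*} (Λ : ι → PartialEquiv X X)
    (htree : IsTreeing μ Λ)
    (N : ℕ) (idx : Fin N → ι) (f : Fin N → X → ℂ) :
    ∀ n : ℕ, 1 ≤ n →
      FMtrace μ (RLam Λ) ((∑ i, FMm (f i) ∘ₗ FMl (Λ (idx i))) ^ n) = 0 := by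
  intro n hn
  refine FMtrace_eq_zero_of_ae_diag_eq_zero ?_
  filter_upwards [htree.ae_forall_not_fixedPoint_wordComp idx] with x hx
  by_contra h
  obtain ⟨w, hw, hfix⟩ := exists_fixedPoint_of_sum_FMm_comp_FMl_pow_diagOne_ne_zero _ f hn h
  exact hx w hw hfix

open MeasureTheory in
/-- Let `Λ = {g_i : A_i → B_i}` be a treeing generating an ergodic
measure-preserving equivalence relation `R_Λ`. For any `N ≥ 1`, `g_{i₁}, …, g_{i_N} ∈ Λ` and
`f_1, …, f_N ∈ L^∞(X)`, the operator `Φ = Σ_{i=1}^N M_{f_i} L_{g_i}` has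
`τ(Φⁿ) = 0` for all `n ≥ 1`. -/
theorem FMtrace_pow_eq_zero {X : Type*} [MeasurableSpace X] [StandardBorelSpace X]
    (μ : Measure X) [IsProbabilityMeasure μ] [NullSingletonClass μ]
    {ι : Type*} [Countable ι] (Λ : ι → PartialEquiv X X)
    (hmp : ∀ i, MeasurePreservingPiso μ (Λ i))
    (htree : IsTreeing μ Λ) (herg : IsErgodicRel μ (RLam Λ))
    (N : ℕ) (hN : 1 ≤ N) (idx : Fin N → ι) (f : Fin N → X → ℂ)
    (hf : ∀ i, MemLp (f i) ⊤ μ) :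
    ∀ n : ℕ, 1 ≤ n →
      FMtrace μ (RLam Λ) ((∑ i, FMm (f i) ∘ₗ FMl (Λ (idx i))) ^ n) = 0 :=
  FMtrace_pow_eq_zero_general μ Λ htree N idx f
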